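/- Let κ_H > 0 and κ_G ∈ ℝ with κ_G/κ_H ∈ (-2, 0), and let H0 ∈ ℝ. Then there exist constants c1, c2 > 0 such that for all real numbers k1, k2: (κ_H/2)(k1 + k2 - H0)² + κ_G·k1·k2 + c1·H0² ≥ c2·(k1² + k2²). -/

import Mathlib

/-! Peter–Paul gives `(k₁ + k₂ - H₀)² ≥ (k₁ + k₂)² / (1 + ε) - H₀² / ε`, which trades the
spontaneous curvature for the constant `c₁ = κ_H / (2ε)`. What remains is the quadratic form
`κ_H (k₁² + k₂²) + 2 (κ_H + (1 + ε) κ_G) k₁ k₂` divided by `2 (1 + ε)`, which is coercive as soon as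
`|κ_H + (1 + ε) κ_G| < κ_H`; since `κ_G / κ_H ∈ (-2, 0)`, such an `ε > 0` exists. -/

lemma div_one_add_sub_div_le_sq_sub {ε : ℝ} (hε : 0 < ε) (x y : ℝ) :
    x ^ 2 / (1 + ε) - y ^ 2 / ε ≤ (x - y) ^ 2 := by
  rw [div_sub_div _ _ (by positivity) hε.ne', div_le_iff₀ (by positivity)]
  nlinarith [sq_nonneg (ε * x - (1 + ε) * y)]

lemma neg_abs_mul_le_mul_two_mul (c x y : ℝ) :
    -|c| * (x ^ 2 + y ^ 2) ≤ c * (2 * x * y) := by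
  have hxy : |2 * x * y| ≤ x ^ 2 + y ^ 2 := by
    rw [abs_le]
    constructor <;> nlinarith [sq_nonneg (x + y), sq_nonneg (x - y)]
  have := neg_abs_le (c * (2 * x * y))
  rw [abs_mul] at this
  nlinarith [abs_nonneg c]

lemma helfrich_density_ge {κH : ℝ} (hκH : 0 ≤ κH) (κG : ℝ) {ε : ℝ} (hε : 0 < ε)
    (H0 k1 k2 : ℝ) :
    (κH - |κH + (1 + ε) * κG|) / (2 * (1 + ε)) * (k1 ^ 2 + k2 ^ 2) ≤
      κH / 2 * (k1 + k2 - H0) ^ 2 + κG * k1 * k2 + κH / (2 * ε) * H0 ^ 2 := by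
  have hpp := mul_le_mul_of_nonneg_left (div_one_add_sub_div_le_sq_sub hε (k1 + k2) H0)
    (by positivity : 0 ≤ κH / 2)
  have hform := neg_abs_mul_le_mul_two_mul (κH + (1 + ε) * κG) k1 k2
  have hsplit : κH / 2 * ((k1 + k2) ^ 2 / (1 + ε) - H0 ^ 2 / ε) + κG * k1 * k2
      + κH / (2 * ε) * H0 ^ 2 =
      (κH * (k1 ^ 2 + k2 ^ 2) + (κH + (1 + ε) * κG) * (2 * k1 * k2)) / (2 * (1 + ε)) := by
    field_simp
    ring
  calc (κH - |κH + (1 + ε) * κG|) / (2 * (1 + ε)) * (k1 ^ 2 + k2 ^ 2)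
      = (κH * (k1 ^ 2 + k2 ^ 2) + -|κH + (1 + ε) * κG| * (k1 ^ 2 + k2 ^ 2))
          / (2 * (1 + ε)) := by ring
    _ ≤ (κH * (k1 ^ 2 + k2 ^ 2) + (κH + (1 + ε) * κG) * (2 * k1 * k2)) / (2 * (1 + ε)) := by
        gcongr
    _ ≤ _ := by linarith

lemma exists_pos_abs_add_one_add_mul_lt {κH κG : ℝ} (hκH : 0 < κH)
    (hratio : κG / κH ∈ Set.Ioo (-2 : ℝ) 0) :
    ∃ ε : ℝ, 0 < ε ∧ |κH + (1 + ε) * κG| < κH := by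
  obtain ⟨hlo, hhi⟩ := hratio
  rw [lt_div_iff₀ hκH] at hlo
  rw [div_lt_iff₀ hκH, zero_mul] at hhi
  -- this choice makes `(1 + ε) κ_G = (κ_G - 2 κ_H) / 2`, so `κ_H + (1 + ε) κ_G = κ_G / 2`
  refine ⟨(2 * κH + κG) / (-2 * κG), div_pos (by linarith) (by linarith), ?_⟩
  have hsum : κH + (1 + (2 * κH + κG) / (-2 * κG)) * κG = κG / 2 := by
    field_simp [hhi.ne]
    ring
  rw [hsum, abs_of_neg (by linarith)]
  linarith

theorem stmt2 (κH κG H0 : ℝ) (hκH : 0 < κH) (hratio : κG / κH ∈ Set.Ioo (-2 : ℝ) 0) :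
    ∃ c1 c2 : ℝ, 0 < c1 ∧ 0 < c2 ∧
      ∀ k1 k2 : ℝ,
        κH/2 * (k1 + k2 - H0)^2 + κG * k1 * k2 + c1 * H0^2 ≥ c2 * (k1^2 + k2^2) := by
  obtain ⟨ε, hε, habs⟩ := exists_pos_abs_add_one_add_mul_lt hκH hratio
  exact ⟨κH / (2 * ε), (κH - |κH + (1 + ε) * κG|) / (2 * (1 + ε)), by positivity,
    div_pos (by linarith) (by positivity), helfrich_density_ge hκH.le κG hε H0⟩
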